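/- arXiv:1102.4030 — 2 statements merged into one kernel-verified Lean document; each statement's English description precedes it below -/
import Mathlib

section
/- Let P be a class of finite groups closed under isomorphism and under taking subgroups. Let Γ be a group with finite generating set X and let Δ be a subgroup of Γ with finite generating set Y. Then there exists a natural number C ≥ 1 such that F^P_{Δ,Y}(n) ≤ F^P_{Γ,X}(C·n) for all n (inequality in ℕ∞). -/
open scoped ENat

/-- `γ` is a product of at most `n` elements of `X ∪ X⁻¹`. -/
def wordLenLE {G : Type*} [Group G] (X : Set G) (γ : G) (n : ℕ) : Prop :=
  ∃ w : List G, w.length ≤ n ∧ (∀ x ∈ w, x ∈ X ∨ x⁻¹ ∈ X) ∧ w.prod = γ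

/-- `D^P_Γ(γ)`: the minimal cardinality of a finite quotient of `Γ` with property `P`
detecting `γ`. -/
noncomputable def DQuot {G : Type*} [Group G] (P : GrpCat.{0} → Prop) (γ : G) : ℕ∞ :=
  sInf {c : ℕ∞ | ∃ (Q : GrpCat.{0}) (φ : G →* ↥Q), Finite ↥Q ∧ P Q ∧
    Function.Surjective φ ∧ φ γ ≠ 1 ∧ c = (Nat.card ↥Q : ℕ∞)}

/-- `F^P_{Γ,X}(n)`: residual finiteness growth. -/
noncomputable def FGrowth {G : Type*} [Group G] (P : GrpCat.{0} → Prop) (X : Set G) (n : ℕ) : ℕ∞ :=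
  ⨆ (γ : G) (_ : γ ≠ 1) (_ : wordLenLE X γ n), DQuot P γ

def allFiniteClass : GrpCat.{0} → Prop := fun _ => True

def solvableClass : GrpCat.{0} → Prop := fun Q => IsSolvable ↥Q

def nilpotentClass : GrpCat.{0} → Prop := fun Q => Group.IsNilpotent ↥Q

/-- `F^P_{Γ,X}` is at most polynomial in `log n`. -/
def PolyLogBounded {G : Type*} [Group G] (P : GrpCat.{0} → Prop) (X : Set G) : Prop :=
  ∃ M r : ℕ, 1 ≤ M ∧ ∀ n : ℕ, 1 ≤ n →
    FGrowth P X n ≤ ((M * ⌈Real.log (M * n) ^ r⌉₊ : ℕ) : ℕ∞)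

def VirtuallyNilpotent (G : Type*) [Group G] : Prop :=
  ∃ H : Subgroup G, H.FiniteIndex ∧ Group.IsNilpotent H

/-!
The inclusion `Δ → Γ` is `C`-Lipschitz for the word lengths, `C` being the longest
`X`-length of a generator in `Y`. A `P`-quotient of `Γ` detecting `δ ∈ Δ` restricts to a
surjection of `Δ` onto a subgroup of that quotient, which is again in `P`, no larger, and
still detects `δ`.
-/

section WordLength

variable {G : Type*} [Group G] {X : Set G}

lemma wordLenLE_one (X : Set G) : wordLenLE X 1 0 :=
  ⟨[], by simp, by simp, by simp⟩

lemma wordLenLE_of_mem {x : G} (hx : x ∈ X) : wordLenLE X x 1 :=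
  ⟨[x], by simp, by simpa using Or.inl hx, by simp⟩

lemma wordLenLE.mono {a : G} {m n : ℕ} (ha : wordLenLE X a m) (h : m ≤ n) :
    wordLenLE X a n := by
  obtain ⟨w, hlen, hw, rfl⟩ := ha
  exact ⟨w, hlen.trans h, hw, rfl⟩

lemma wordLenLE.mul {a b : G} {m n : ℕ} (ha : wordLenLE X a m) (hb : wordLenLE X b n) :
    wordLenLE X (a * b) (m + n) := by
  obtain ⟨u, hu, hu', rfl⟩ := ha
  obtain ⟨v, hv, hv', rfl⟩ := hb
  refine ⟨u ++ v, by simp only [List.length_append]; omega, ?_, List.prod_append⟩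
  intro x hx
  rcases List.mem_append.1 hx with h | h
  exacts [hu' x h, hv' x h]

lemma wordLenLE.inv {a : G} {n : ℕ} (ha : wordLenLE X a n) : wordLenLE X a⁻¹ n := by
  obtain ⟨w, hlen, hw, rfl⟩ := ha
  refine ⟨(w.map Inv.inv).reverse, by simpa using hlen, ?_, (List.prod_inv_reverse w).symm⟩
  simp only [List.mem_reverse, List.mem_map]
  rintro _ ⟨y, hy, rfl⟩
  simpa [or_comm] using hw y hy

lemma exists_wordLenLE (hX : Subgroup.closure X = ⊤) (g : G) : ∃ n, wordLenLE X g n := by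
  have hg : g ∈ Subgroup.closure X := hX ▸ Subgroup.mem_top g
  induction hg using Subgroup.closure_induction with
  | mem x hx => exact ⟨1, wordLenLE_of_mem hx⟩
  | one => exact ⟨0, wordLenLE_one X⟩
  | mul a b _ _ ha hb =>
    obtain ⟨m, hm⟩ := ha
    obtain ⟨n, hn⟩ := hb
    exact ⟨m + n, hm.mul hn⟩
  | inv a _ ha =>
    obtain ⟨m, hm⟩ := ha
    exact ⟨m, hm.inv⟩

lemma exists_forall_wordLenLE {ι : Type*} {Y : Set ι} (hX : Subgroup.closure X = ⊤)
    (hY : Y.Finite) (f : ι → G) : ∃ C, 1 ≤ C ∧ ∀ y ∈ Y, wordLenLE X (f y) C := by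
  choose len hlen using exists_wordLenLE hX
  obtain ⟨B, hB⟩ := (hY.image (fun y => len (f y))).bddAbove
  refine ⟨B + 1, by omega, fun y hy => (hlen (f y)).mono ?_⟩
  have : len (f y) ≤ B := hB ⟨y, hy, rfl⟩
  omega

lemma wordLenLE.map {H : Type*} [Group H] {Y : Set H} (f : H →* G) {C : ℕ}
    (hC : ∀ y ∈ Y, wordLenLE X (f y) C) {h : H} {n : ℕ} (hh : wordLenLE Y h n) :
    wordLenLE X (f h) (C * n) := by
  obtain ⟨w, hlen, hw, rfl⟩ := hh
  refine wordLenLE.mono ?_ (Nat.mul_le_mul_left C hlen)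
  clear hlen
  induction w with
  | nil => simpa using wordLenLE_one X
  | cons a t ih =>
    have ha : wordLenLE X (f a) C := by
      rcases hw a List.mem_cons_self with h | h
      · exact hC a h
      · simpa using (hC a⁻¹ h).inv
    have ht := ih (fun x hx => hw x (List.mem_cons_of_mem a hx))
    simpa [Nat.mul_succ, Nat.add_comm] using ha.mul ht

end WordLength

section Detection

variable {G H : Type*} [Group G] [Group H] (P : GrpCat.{0} → Prop)

lemma DQuot_le_DQuot_map (hsub : ∀ (Q : GrpCat.{0}) (K : Subgroup ↥Q), P Q → P (GrpCat.of ↥K))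
    (f : H →* G) (h : H) : DQuot P h ≤ DQuot P (f h) := by
  refine le_sInf ?_
  rintro _ ⟨Q, φ, hfin, hP, -, hne, rfl⟩
  let ψ := φ.comp f
  calc DQuot P h ≤ (Nat.card ψ.range : ℕ∞) := by
        refine sInf_le ⟨GrpCat.of ψ.range, ψ.rangeRestrict, Subtype.finite, hsub Q ψ.range hP,
          ψ.rangeRestrict_surjective, fun h1 => hne ?_, rfl⟩
        simpa [ψ] using congrArg Subtype.val h1
    _ ≤ Nat.card Q := by exact_mod_cast Nat.card_le_card_of_injective _ ψ.range.subtype_injective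

lemma FGrowth_le_FGrowth_of_injective
    (hsub : ∀ (Q : GrpCat.{0}) (K : Subgroup ↥Q), P Q → P (GrpCat.of ↥K))
    {X : Set G} {Y : Set H} {f : H →* G} (hf : Function.Injective f) {m n : ℕ}
    (hlen : ∀ h, wordLenLE Y h n → wordLenLE X (f h) m) : FGrowth P Y n ≤ FGrowth P X m := by
  refine iSup_le fun h => iSup_le fun hne => iSup_le fun hh => ?_
  have hne' : f h ≠ 1 := (map_ne_one_iff f hf).2 hne
  calc DQuot P h ≤ DQuot P (f h) := DQuot_le_DQuot_map P hsub f h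
    _ ≤ FGrowth P X m :=
      le_iSup_of_le (f h) <| le_iSup_of_le hne' <|
        le_iSup (fun _ : wordLenLE X (f h) m => DQuot P (f h)) (hlen h hh)

end Detection

theorem stmt6_general {G : Type*} [Group G] (P : GrpCat.{0} → Prop)
    (hsub : ∀ (Q : GrpCat.{0}) (H : Subgroup ↥Q), P Q → P (GrpCat.of ↥H))
    (X : Set G) (hXgen : Subgroup.closure X = ⊤)
    (Δ : Subgroup G) (Y : Set ↥Δ) (hYfin : Y.Finite) :
    ∃ C : ℕ, 1 ≤ C ∧ ∀ n : ℕ, FGrowth P Y n ≤ FGrowth P X (C * n) := by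
  obtain ⟨C, hC1, hC⟩ := exists_forall_wordLenLE hXgen hYfin Δ.subtype
  exact ⟨C, hC1, fun n =>
    FGrowth_le_FGrowth_of_injective P hsub Δ.subtype_injective fun _ => wordLenLE.map _ hC⟩

theorem stmt6 {G : Type*} [Group G] (P : GrpCat.{0} → Prop)
    (hiso : ∀ Q R : GrpCat.{0}, (↥Q ≃* ↥R) → P Q → P R)
    (hsub : ∀ (Q : GrpCat.{0}) (H : Subgroup ↥Q), P Q → P (GrpCat.of ↥H))
    (X : Set G) (hXfin : X.Finite) (hXgen : Subgroup.closure X = ⊤)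
    (Δ : Subgroup G) (Y : Set ↥Δ) (hYfin : Y.Finite) (hYgen : Subgroup.closure Y = ⊤) :
    ∃ C : ℕ, 1 ≤ C ∧ ∀ n : ℕ, FGrowth P Y n ≤ FGrowth P X (C * n) :=
  stmt6_general P hsub X hXgen Δ Y hYfin
end

section
/- Let F₂ be the free group on the two-element set {x, y}. Then F^{nil}_{F₂,{x,y}}(n) ≽ 2^{√n}: there exists a natural number M ≥ 1 such that 2^{⌊√n⌋} ≤ M · F^{nil}_{F₂,{x,y}}(M·n) for all n ≥ 1 (inequality in ℕ∞). -/
open scoped ENat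

/-!
Let `w₀ = x y x⁻¹` and `wₖ₊₁ = x ⁅wₖ, y wₖ y⁻¹⁆ x⁻¹`. Since `⁅γᵢ, γⱼ⁆ ≤ γᵢ₊ⱼ₊₁` for the lower
central series (indexed from `γ₀ = G`), `wₖ` lies in `γ_{2ᵏ-1}`, while its length is
`5 · 4ᵏ - 2`; its spelled-out word is reduced, so `wₖ ≠ 1`. A finite nilpotent group in which
`γₘ` is nontrivial has class `> m`, and its upper central series then at least doubles in size
`m + 1` times, so every nilpotent quotient detecting `wₖ` has order at least `2 ^ 2ᵏ`. Taking
`2ᵏ ≈ √n` gives the bound.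
-/

namespace Subgroup

variable {G : Type*} [Group G]

theorem commutator_commutator_le_of_rotate {H₁ H₂ H₃ N : Subgroup G} [N.Normal]
    (h1 : ⁅⁅H₂, H₃⁆, H₁⁆ ≤ N) (h2 : ⁅⁅H₃, H₁⁆, H₂⁆ ≤ N) : ⁅⁅H₁, H₂⁆, H₃⁆ ≤ N := by
  simp only [← QuotientGroup.ker_mk' N, ← map_eq_bot_iff, map_commutator] at h1 h2 ⊢
  exact commutator_commutator_eq_bot_of_rotate h1 h2

theorem commutator_lowerCentralSeries_le (m n : ℕ) :
    ⁅(⊤ : Subgroup G).lowerCentralSeries m, (⊤ : Subgroup G).lowerCentralSeries n⁆ ≤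
      (⊤ : Subgroup G).lowerCentralSeries (m + n + 1) := by
  induction n generalizing m with
  | zero => rfl
  | succ n ih =>
    rw [lowerCentralSeries_succ, commutator_comm]
    apply commutator_commutator_le_of_rotate
    · rw [commutator_comm ⊤, ← lowerCentralSeries_succ]
      convert ih (m + 1) using 2
      omega
    · exact (commutator_mono (ih m) le_rfl).trans_eq (lowerCentralSeries_succ _ _).symm

theorem two_pow_le_card_of_strictMonoOn [Finite G] {H : ℕ → Subgroup G} {c : ℕ}
    (hH : StrictMonoOn H (Set.Iic c)) {i : ℕ} (hi : i ≤ c) : 2 ^ i ≤ Nat.card (H i) := by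
  induction i with
  | zero => exact Nat.card_pos
  | succ i ih =>
    have hlt : H i < H (i + 1) :=
      hH (Set.mem_Iic.2 (by omega)) (Set.mem_Iic.2 hi) (Nat.lt_succ_self i)
    obtain ⟨d, hd⟩ := card_dvd_of_le hlt.le
    have hd1 : d ≠ 1 := fun h => hlt.ne (eq_of_le_of_card_ge hlt.le (by rw [hd, h, mul_one]))
    have hd0 : d ≠ 0 := by rintro rfl; exact Nat.card_pos.ne' hd
    rw [hd, pow_succ]
    exact Nat.mul_le_mul (ih (by omega)) (by omega)

end Subgroup

namespace Group

theorem two_pow_nilpotencyClass_le_card (G : Type*) [Group G] [Finite G] [IsNilpotent G] :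
    2 ^ nilpotencyClass G ≤ Nat.card G := by
  have := Subgroup.two_pow_le_card_of_strictMonoOn
    (Subgroup.upperCentralSeries.StrictMonoOn G) le_rfl
  rwa [Subgroup.upperCentralSeries_nilpotencyClass, Subgroup.card_top] at this

theorem two_pow_le_card_of_lowerCentralSeries_ne_bot {G : Type*} [Group G] [Finite G]
    [IsNilpotent G] {m : ℕ} (h : (⊤ : Subgroup G).lowerCentralSeries m ≠ ⊥) :
    2 ^ (m + 1) ≤ Nat.card G := by
  rw [Ne, Subgroup.lowerCentralSeries_eq_bot_iff_nilpotencyClass_le, not_le] at h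
  exact (Nat.pow_le_pow_right two_pos h).trans (two_pow_nilpotencyClass_le_card G)

end Group

theorem wordLenLE.mono_s10 {G : Type*} [Group G] {X : Set G} {γ : G} {m n : ℕ}
    (h : wordLenLE X γ m) (hmn : m ≤ n) : wordLenLE X γ n :=
  let ⟨w, hw, hX, hprod⟩ := h
  ⟨w, hw.trans hmn, hX, hprod⟩

theorem dQuot_le_fGrowth {G : Type*} [Group G] (P : GrpCat.{0} → Prop) (X : Set G) {γ : G}
    (hγ : γ ≠ 1) {n : ℕ} (hn : wordLenLE X γ n) : DQuot P γ ≤ FGrowth P X n :=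
  le_iSup_of_le γ <| le_iSup_of_le hγ <| le_iSup_of_le hn le_rfl

theorem two_pow_le_dQuot_of_mem_lowerCentralSeries {G : Type*} [Group G] {γ : G} {m : ℕ}
    (hγ : γ ∈ (⊤ : Subgroup G).lowerCentralSeries m) :
    ((2 ^ (m + 1) : ℕ) : ℕ∞) ≤ DQuot nilpotentClass γ := by
  refine le_sInf ?_
  rintro _ ⟨Q, φ, hfin, hnil, -, hφγ, rfl⟩
  have : Group.IsNilpotent Q := hnil
  have hφ : φ γ ∈ ((⊤ : Subgroup G).map φ).lowerCentralSeries m := by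
    rw [← Subgroup.map_lowerCentralSeries]
    exact Subgroup.mem_map_of_mem φ hγ
  replace hφ : φ γ ∈ (⊤ : Subgroup Q).lowerCentralSeries m :=
    Subgroup.lowerCentralSeries_mono m le_top hφ
  exact Nat.cast_le.mpr <| Group.two_pow_le_card_of_lowerCentralSeries_ne_bot
    fun h => hφγ (by rwa [h, Subgroup.mem_bot] at hφ)

namespace FreeGroup

open scoped commutatorElement

theorem wordLenLE_mk {α : Type*} (L : List (α × Bool)) :
    wordLenLE (Set.range of) (mk L) L.length := by
  refine ⟨L.map fun a => cond a.2 (of a.1) (of a.1)⁻¹, by simp, ?_, ?_⟩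
  · simp only [List.mem_map]
    rintro _ ⟨⟨a, _ | _⟩, -, rfl⟩ <;> simp
  · rw [← lift_mk, lift_of_apply]

theorem IsReduced.invRev {α : Type*} [DecidableEq α] {L : List (α × Bool)} (h : IsReduced L) :
    IsReduced (invRev L) :=
  isReduced_iff_reduce_eq.2 (by rw [reduce_invRev, h.reduce_eq])

/-- The word of `x ⁅w, y w y⁻¹⁆ x⁻¹` for `w = mk L`, where `x = of true` and `y = of false`. -/
def conjCommWord (L : List (Bool × Bool)) : List (Bool × Bool) :=
  (true, true) :: L ++ (false, true) :: L ++ (false, false) :: invRev L ++ (false, true) ::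
    invRev L ++ [(false, false), (true, false)]

theorem mk_conjCommWord (L : List (Bool × Bool)) :
    mk (conjCommWord L) = of true * ⁅mk L, of false * mk L * (of false)⁻¹⁆ * (of true)⁻¹ := by
  simp only [commutatorElement_def, of, inv_mk, mul_mk, conjCommWord, invRev_append, invRev_invRev]
  simp [invRev]

theorem length_conjCommWord (L : List (Bool × Bool)) :
    (conjCommWord L).length = 4 * L.length + 6 := by
  simp only [conjCommWord, List.cons_append, List.length_cons, List.length_append, invRev_length,
    List.length_nil]
  omega

theorem isReduced_conjCommWord {L : List (Bool × Bool)} (hL : IsReduced L)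
    (hhead : L.head? = some (true, true)) (hlast : L.getLast? = some (true, false)) :
    IsReduced (conjCommWord L) := by
  have hhead' : (invRev L).head? = some (true, true) := by simp [invRev, hlast]
  have hlast' : (invRev L).getLast? = some (true, false) := by
    simp [invRev, List.getLast?_reverse, hhead]
  simpa [conjCommWord, IsReduced, List.isChain_append, List.isChain_cons, List.head?_append, hhead,
    hlast, hhead', hlast'] using ⟨hL, hL.invRev⟩

def iteratedCommWord : ℕ → List (Bool × Bool)
  | 0 => [(true, true), (false, true), (true, false)]
  | k + 1 => conjCommWord (iteratedCommWord k)

theorem isReduced_iteratedCommWord (k : ℕ) :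
    IsReduced (iteratedCommWord k) ∧ (iteratedCommWord k).head? = some (true, true) ∧
      (iteratedCommWord k).getLast? = some (true, false) := by
  induction k with
  | zero => simp [iteratedCommWord, IsReduced]
  | succ k ih =>
    obtain ⟨hred, hhead, hlast⟩ := ih
    refine ⟨isReduced_conjCommWord hred hhead hlast, rfl, ?_⟩
    simp [iteratedCommWord, conjCommWord, List.getLast?_cons, List.getLast?_append]

theorem mk_iteratedCommWord_ne_one (k : ℕ) : mk (iteratedCommWord k) ≠ 1 := by
  obtain ⟨hred, hhead, -⟩ := isReduced_iteratedCommWord k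
  rw [Ne, ← toWord_eq_nil_iff, toWord_mk, hred.reduce_eq]
  rintro h
  simp [h] at hhead

theorem length_iteratedCommWord (k : ℕ) : (iteratedCommWord k).length + 2 = 5 * 4 ^ k := by
  induction k with
  | zero => rfl
  | succ k ih => rw [iteratedCommWord, length_conjCommWord, pow_succ]; omega

theorem mk_iteratedCommWord_mem_lowerCentralSeries (k : ℕ) :
    mk (iteratedCommWord k) ∈ (⊤ : Subgroup (FreeGroup Bool)).lowerCentralSeries (2 ^ k - 1) := by
  induction k with
  | zero => trivial
  | succ k ih =>
    have hconj := (Subgroup.lowerCentralSeries_normal ⊤ _).conj_mem _ ih (of false)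
    have hcomm := Subgroup.commutator_lowerCentralSeries_le _ _
      (Subgroup.commutator_mem_commutator ih hconj)
    have hindex : 2 ^ k - 1 + (2 ^ k - 1) + 1 = 2 ^ (k + 1) - 1 := by
      have := Nat.one_le_two_pow (n := k)
      rw [pow_succ]
      omega
    rw [hindex] at hcomm
    rw [iteratedCommWord, mk_conjCommWord]
    exact (Subgroup.lowerCentralSeries_normal ⊤ _).conj_mem _ hcomm (of true)

end FreeGroup

theorem exists_sqrt_le_two_pow_and_four_pow_le {n : ℕ} (hn : 1 ≤ n) :
    ∃ k, Nat.sqrt n ≤ 2 ^ k ∧ 4 ^ k ≤ 4 * n := by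
  refine ⟨Nat.log 2 n.sqrt + 1, (Nat.lt_pow_succ_log_self one_lt_two _).le, ?_⟩
  have hlog : 2 ^ Nat.log 2 n.sqrt ≤ n.sqrt := Nat.pow_log_le_self 2 (Nat.sqrt_pos.2 hn).ne'
  calc 4 ^ (Nat.log 2 n.sqrt + 1) = 4 * (2 ^ Nat.log 2 n.sqrt * 2 ^ Nat.log 2 n.sqrt) := by
        rw [← mul_pow, pow_succ']; norm_num
    _ ≤ 4 * (n.sqrt * n.sqrt) := by gcongr
    _ ≤ 4 * n := by gcongr; exact Nat.sqrt_le n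

theorem stmt10 :
    ∃ M : ℕ, 1 ≤ M ∧ ∀ n : ℕ, 1 ≤ n →
      ((2 ^ Nat.sqrt n : ℕ) : ℕ∞) ≤
        (M : ℕ∞) * FGrowth nilpotentClass
          (Set.range (FreeGroup.of : Bool → FreeGroup Bool)) (M * n) := by
  refine ⟨20, by norm_num, fun n hn => ?_⟩
  obtain ⟨k, hsqrt, hpow⟩ := exists_sqrt_le_two_pow_and_four_pow_le hn
  have hlen : (FreeGroup.iteratedCommWord k).length ≤ 20 * n := by
    have := FreeGroup.length_iteratedCommWord k
    omega
  set w := FreeGroup.iteratedCommWord k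
  calc ((2 ^ Nat.sqrt n : ℕ) : ℕ∞) ≤ ((2 ^ (2 ^ k - 1 + 1) : ℕ) : ℕ∞) := by
        rw [Nat.sub_add_cancel Nat.one_le_two_pow]
        exact_mod_cast Nat.pow_le_pow_right two_pos hsqrt
    _ ≤ DQuot nilpotentClass (FreeGroup.mk w) :=
        two_pow_le_dQuot_of_mem_lowerCentralSeries
          (FreeGroup.mk_iteratedCommWord_mem_lowerCentralSeries k)
    _ ≤ FGrowth nilpotentClass (Set.range FreeGroup.of) (20 * n) :=
        dQuot_le_fGrowth _ _ (FreeGroup.mk_iteratedCommWord_ne_one k)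
          ((FreeGroup.wordLenLE_mk w).mono_s10 hlen)
    _ ≤ ((20 : ℕ) : ℕ∞) * FGrowth nilpotentClass (Set.range FreeGroup.of) (20 * n) :=
        le_mul_of_one_le_left' (by norm_num)
end
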